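/- Let κ be a multivariate measure of concordance with r_2 = 2/3, and suppose r_3, r_4 ≠ 0. Then for every 4-copula C: κ_3(C_1) + κ_3(C_2) − (2/3)κ_2(C_{12}) = κ_3(C_3) + κ_3(C_4) − (2/3)κ_2(C_{34}), where C_i and C_{ij} denote extended marginals (coordinates set to 1) evaluated via their proper copulas. -/

import Mathlib

open MeasureTheory Filter

noncomputable section

/-- The unit cube `I^n ⊆ ℝ^n`. -/
def cube (n : ℕ) : Set (Fin n → ℝ) := Set.univ.pi fun _ => Set.Icc (0:ℝ) 1

/-- The box `[0,x] = [0,x_1] × ⋯ × [0,x_n]`. -/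
def box {n : ℕ} (x : Fin n → ℝ) : Set (Fin n → ℝ) := Set.univ.pi fun i => Set.Icc 0 (x i)

/-- `C` is an `n`-copula: on `I^n` it is the box-distribution function of a probability
measure all of whose one-dimensional margins are uniform on `[0,1]`. -/
def IsCopula {n : ℕ} (C : (Fin n → ℝ) → ℝ) : Prop :=
  ∃ μ : Measure (Fin n → ℝ), IsProbabilityMeasure μ ∧
    (∀ x ∈ cube n, C x = (μ (box x)).toReal) ∧
    (∀ i : Fin n, μ.map (fun y => y i) = volume.restrict (Set.Icc (0:ℝ) 1))

/-- The action `τ*(C) = C ∘ τ` of a coordinate permutation (with index permutation `τ`). -/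
def permTrans {n : ℕ} (τ : Equiv.Perm (Fin n)) (C : (Fin n → ℝ) → ℝ) : (Fin n → ℝ) → ℝ :=
  fun x => C fun i => x (τ i)

/-- The action `σ_S*(C)(x) = μ_C(σ_S([0,x]))` of the reflection `σ_S`, written out by
inclusion–exclusion in terms of the values of `C`. -/
def reflTrans {n : ℕ} (S : Finset (Fin n)) (C : (Fin n → ℝ) → ℝ) : (Fin n → ℝ) → ℝ :=
  fun x => ∑ T ∈ S.powerset, (-1 : ℝ) ^ T.card *
    C (fun i => if i ∈ T then 1 - x i else if i ∈ S then 1 else x i)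

/-- The comonotone copula `M(t_1,…,t_n) = min(t_1,…,t_n)`. -/
def Mcop (n : ℕ) : (Fin n → ℝ) → ℝ := fun x => iInf x

/-- The independence copula `Π(t_1,…,t_n) = t_1 ⋯ t_n`. -/
def Pcop (n : ℕ) : (Fin n → ℝ) → ℝ := fun x => ∏ i, x i

/-- The proper `(n - card P)`-copula of the extended marginal `C_P` of `C`:
coordinates in `P` are set equal to `1` and the remaining coordinates are relabelled
in increasing order. -/
def properMarg {n : ℕ} (C : (Fin n → ℝ) → ℝ) (P : Finset (Fin n)) :
    (Fin (Pᶜ.card) → ℝ) → ℝ :=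
  fun y => C fun i => if h : i ∈ Pᶜ then y ((Pᶜ.orderIsoOfFin rfl).symm ⟨i, h⟩) else 1

/-- A multivariate measure of concordance `κ = ({κ_n},{r_n})` in the sense of Taylor:
normalization, monotonicity, continuity, permutation invariance, duality, the
reflection symmetry property and the transition property, extended by `κ_0 = κ_1 = 0`. -/
structure ConcordanceMeasure where
  κ : (n : ℕ) → ((Fin n → ℝ) → ℝ) → ℝ
  r : ℕ → ℝ
  kappa_zero : ∀ C, κ 0 C = 0
  kappa_one : ∀ C, κ 1 C = 0
  normM : ∀ n, 2 ≤ n → κ n (Mcop n) = 1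
  normPi : ∀ n, 2 ≤ n → κ n (Pcop n) = 0
  mono : ∀ n, 2 ≤ n → ∀ A B : (Fin n → ℝ) → ℝ, IsCopula A → IsCopula B →
    (∀ x ∈ cube n, A x ≤ B x) →
    (∀ x ∈ cube n, reflTrans Finset.univ A x ≤ reflTrans Finset.univ B x) →
    κ n A ≤ κ n B
  cont : ∀ n, 2 ≤ n → ∀ (C : (Fin n → ℝ) → ℝ) (Cm : ℕ → (Fin n → ℝ) → ℝ),
    IsCopula C → (∀ m, IsCopula (Cm m)) →
    TendstoUniformlyOn Cm C atTop (cube n) →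
    Tendsto (fun m => κ n (Cm m)) atTop (nhds (κ n C))
  permInv : ∀ n, 2 ≤ n → ∀ C : (Fin n → ℝ) → ℝ, IsCopula C →
    ∀ τ : Equiv.Perm (Fin n), κ n (permTrans τ C) = κ n C
  duality : ∀ n, 2 ≤ n → ∀ C : (Fin n → ℝ) → ℝ, IsCopula C →
    κ n (reflTrans Finset.univ C) = κ n C
  rsp : ∀ n, 2 ≤ n → ∀ C : (Fin n → ℝ) → ℝ, IsCopula C →
    ∑ S : Finset (Fin n), κ n (reflTrans S C) = 0
  transition : ∀ n, 2 ≤ n → ∀ (C : (Fin n → ℝ) → ℝ) (E : (Fin (n+1) → ℝ) → ℝ),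
    IsCopula C → IsCopula E →
    (∀ x ∈ cube n, C x = E (fun i : Fin (n+1) =>
      if h : (i : ℕ) = 0 then 1 else x ⟨(i : ℕ) - 1, by have := i.isLt; omega⟩)) →
    r n * κ n C = κ (n+1) E + κ (n+1) (reflTrans {0} E)

/-!
Moving coordinate `a` to the front by a cyclic permutation, the transition property reads
`r_n κ_n(C_a) = κ_{n+1}(C) + κ_{n+1}(σ_a C)`. Applying it to `C`, to `C_a` and to `σ_c C`, where
`(σ_c C)_a = σ_b (C_a)` and `c` is the `b`-th remaining coordinate, leaves
`r_3 (κ_3(C_a) + κ_3(C_c) - r_2 κ_2(C_{ac})) = κ_4(C) - κ_4(σ_{ac} C)`.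
Reflections compose like the symmetric differences of their index sets, because `σ_S C` is the
distribution function of the image of the copula measure under `z ↦ (1 - z_i)_{i ∈ S}`; with
duality this gives `κ_4(σ_{01} C) = κ_4(σ_{23} C)`, so both sides of the claim equal
`(κ_4(C) - κ_4(σ_{01} C)) / r_3`.
-/

def IsCopulaMeasure {n : ℕ} (C : (Fin n → ℝ) → ℝ) (μ : Measure (Fin n → ℝ)) : Prop :=
  IsProbabilityMeasure μ ∧
    (∀ x ∈ cube n, C x = (μ (box x)).toReal) ∧
    (∀ i : Fin n, μ.map (fun y => y i) = volume.restrict (Set.Icc (0:ℝ) 1))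

def extMarg {n : ℕ} (C : (Fin (n+1) → ℝ) → ℝ) (a : Fin (n+1)) : (Fin n → ℝ) → ℝ :=
  fun y => C (a.insertNth 1 y)

def reflMap {n : ℕ} (S : Finset (Fin n)) (z : Fin n → ℝ) : Fin n → ℝ :=
  fun i => if i ∈ S then 1 - z i else z i

section Boxes

variable {n : ℕ}

lemma mem_cube {x : Fin n → ℝ} : x ∈ cube n ↔ ∀ i, x i ∈ Set.Icc 0 1 := Set.mem_univ_pi

lemma mem_box {x z : Fin n → ℝ} : z ∈ box x ↔ ∀ i, z i ∈ Set.Icc 0 (x i) := Set.mem_univ_pi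

lemma measurableSet_box (x : Fin n → ℝ) : MeasurableSet (box x) :=
  MeasurableSet.univ_pi fun _ => measurableSet_Icc

lemma mem_box_update {x z : Fin n → ℝ} {a : Fin n} {c : ℝ} :
    z ∈ box (Function.update x a c) ↔ z a ∈ Set.Icc 0 c ∧ ∀ i ≠ a, z i ∈ Set.Icc 0 (x i) := by
  rw [mem_box]
  exact Function.forall_update_iff x (p := fun i v => z i ∈ Set.Icc 0 v)

lemma update_mem_cube {x : Fin n → ℝ} (hx : x ∈ cube n) (a : Fin n) {c : ℝ}
    (hc : c ∈ Set.Icc 0 1) : Function.update x a c ∈ cube n := by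
  rw [mem_cube]
  exact (Function.forall_update_iff x (p := fun _ v => v ∈ Set.Icc 0 1)).2
    ⟨hc, fun i _ => mem_cube.1 hx i⟩

end Boxes

section Reflection

variable {n : ℕ}

lemma measurable_reflMap (S : Finset (Fin n)) : Measurable (reflMap S) := by
  refine measurable_pi_lambda _ fun i => ?_
  unfold reflMap
  split_ifs <;> fun_prop

lemma reflMap_comp (S T : Finset (Fin n)) : reflMap T ∘ reflMap S = reflMap (symmDiff S T) := by
  funext z i
  simp only [Function.comp_apply, reflMap, Finset.mem_symmDiff]
  by_cases hS : i ∈ S <;> by_cases hT : i ∈ T <;> simp [hS, hT]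

lemma reflMap_empty : reflMap (∅ : Finset (Fin n)) = id := by
  funext z i
  simp [reflMap]

lemma reflMap_singleton (a : Fin n) (z : Fin n → ℝ) :
    reflMap {a} z = Function.update z a (1 - z a) := by
  funext i
  by_cases hi : i = a
  · subst hi; simp [reflMap]
  · simp [reflMap, hi]

lemma reflMap_insert {a : Fin n} {S : Finset (Fin n)} (ha : a ∉ S) :
    reflMap (insert a S) = reflMap {a} ∘ reflMap S := by
  rw [reflMap_comp, (Finset.disjoint_singleton_right.2 ha).symmDiff_eq_sup, Finset.sup_eq_union,
    Finset.union_singleton]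

lemma reflTrans_empty (C : (Fin n → ℝ) → ℝ) : reflTrans ∅ C = C := by
  funext x
  simp [reflTrans]

lemma reflTrans_singleton (a : Fin n) (C : (Fin n → ℝ) → ℝ) (x : Fin n → ℝ) :
    reflTrans {a} C x = C (Function.update x a 1) - C (Function.update x a (1 - x a)) := by
  have hpow : ({a} : Finset (Fin n)).powerset = {∅, {a}} := by
    ext T
    simp [Finset.subset_singleton_iff]
  rw [reflTrans, hpow, Finset.sum_pair (Finset.singleton_ne_empty a).symm]
  simp only [Finset.card_empty, pow_zero, one_mul, Finset.card_singleton, pow_one, neg_one_mul,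
    Finset.notMem_empty, if_false, Finset.mem_singleton, ← sub_eq_add_neg]
  congr 2 <;> funext i <;> by_cases hi : i = a <;> simp [hi]

lemma reflTrans_insert {a : Fin n} {S : Finset (Fin n)} (ha : a ∉ S) (C : (Fin n → ℝ) → ℝ) :
    reflTrans (insert a S) C = reflTrans {a} (reflTrans S C) := by
  funext x
  rw [reflTrans_singleton, reflTrans, reflTrans, reflTrans, Finset.sum_powerset_insert ha,
    sub_eq_add_neg, ← Finset.sum_neg_distrib]
  congr 1 <;> refine Finset.sum_congr rfl fun T hT => ?_ <;>
    have haT : a ∉ T := fun h => ha (Finset.mem_powerset.1 hT h)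
  · congr 2
    funext i
    by_cases hi : i = a
    · subst hi; simp [ha, haT]
    · simp [hi]
  · rw [Finset.card_insert_of_notMem haT, pow_succ, mul_neg_one, neg_mul, neg_inj]
    congr 2
    funext i
    by_cases hi : i = a
    · subst hi; simp [ha, haT]
    · simp [hi]

lemma reflTrans_singleton_permTrans (τ : Equiv.Perm (Fin n)) (a : Fin n) (C : (Fin n → ℝ) → ℝ) :
    reflTrans {τ a} (permTrans τ C) = permTrans τ (reflTrans {a} C) := by
  funext x
  simp only [reflTrans_singleton, permTrans]
  congr 2 <;> funext i <;> simp [Function.update_apply]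

lemma reflTrans_singleton_extMarg (C : (Fin (n+1) → ℝ) → ℝ) (a : Fin (n+1)) (b : Fin n) :
    reflTrans {b} (extMarg C a) = extMarg (reflTrans {a.succAbove b} C) a := by
  funext y
  simp only [reflTrans_singleton, extMarg, Fin.insertNth_update, Fin.insertNth_apply_succAbove]

lemma reflTrans_eqOn {A B : (Fin n → ℝ) → ℝ} (h : Set.EqOn A B (cube n)) (S : Finset (Fin n)) :
    Set.EqOn (reflTrans S A) (reflTrans S B) (cube n) := by
  intro x hx
  refine Finset.sum_congr rfl fun T _ => congrArg _ (h (mem_cube.2 fun i => ?_))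
  have hxi := mem_cube.1 hx i
  split_ifs
  · exact ⟨by linarith [hxi.2], by linarith [hxi.1]⟩
  · exact ⟨zero_le_one, le_rfl⟩
  · exact hxi

end Reflection

lemma map_one_sub_volume_restrict_Icc :
    (volume.restrict (Set.Icc (0:ℝ) 1)).map (fun t => 1 - t) = volume.restrict (Set.Icc 0 1) := by
  have hm : Measurable fun t : ℝ => 1 - t := by fun_prop
  conv_rhs => rw [← (Measure.measurePreserving_sub_left volume 1).map_eq,
    Measure.restrict_map hm measurableSet_Icc]
  congr 2
  ext t
  simp only [Set.mem_preimage, Set.mem_Icc]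
  constructor <;> intro h <;> constructor <;> linarith [h.1, h.2]

namespace IsCopulaMeasure

variable {n : ℕ} {C : (Fin n → ℝ) → ℝ} {μ : Measure (Fin n → ℝ)}

lemma measure_coord_eq (h : IsCopulaMeasure C μ) (i : Fin n) (c : ℝ) :
    μ {z | z i = c} = 0 := by
  rw [show {z : Fin n → ℝ | z i = c} = (fun z => z i) ⁻¹' {c} from rfl,
    ← Measure.map_apply (measurable_pi_apply i) (measurableSet_singleton c), h.2.2 i]
  exact Measure.restrict_le_self _ |>.trans_eq Real.volume_singleton |> nonpos_iff_eq_zero.mp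

lemma measure_coord_notMem_Icc (h : IsCopulaMeasure C μ) (i : Fin n) :
    μ {z | z i ∈ Set.Icc 0 1}ᶜ = 0 := by
  rw [show {z : Fin n → ℝ | z i ∈ Set.Icc 0 1}ᶜ = (fun z => z i) ⁻¹' (Set.Icc 0 1)ᶜ from rfl,
    ← Measure.map_apply (measurable_pi_apply i) measurableSet_Icc.compl, h.2.2 i,
    Measure.restrict_apply measurableSet_Icc.compl, Set.compl_inter_self, measure_empty]

lemma eqOn {D : (Fin n → ℝ) → ℝ} (hC : IsCopulaMeasure C μ) (hD : IsCopulaMeasure D μ) :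
    Set.EqOn C D (cube n) :=
  fun x hx => (hC.2.1 x hx).trans (hD.2.1 x hx).symm

lemma permTrans (h : IsCopulaMeasure C μ) (τ : Equiv.Perm (Fin n)) :
    IsCopulaMeasure (permTrans τ C) (μ.map fun z i => z (τ.symm i)) := by
  obtain ⟨hμ, hbox, hunif⟩ := h
  have hm : Measurable fun (z : Fin n → ℝ) i => z (τ.symm i) := by fun_prop
  refine ⟨Measure.isProbabilityMeasure_map hm.aemeasurable, fun x hx => ?_, fun i => ?_⟩
  · have hpre : (fun (z : Fin n → ℝ) i => z (τ.symm i)) ⁻¹' box x = box (x ∘ τ) := by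
      ext z
      simp only [Set.mem_preimage, mem_box, Function.comp_apply]
      exact ⟨fun h j => by simpa using h (τ j), fun h i => by simpa using h (τ.symm i)⟩
    rw [Measure.map_apply hm (measurableSet_box x), hpre]
    exact hbox _ (mem_cube.2 fun i => mem_cube.1 hx (τ i))
  · rw [Measure.map_map (measurable_pi_apply i) hm]
    exact hunif (τ.symm i)

lemma measure_box_update_one (h : IsCopulaMeasure C μ) {x : Fin n → ℝ} (hx : x ∈ cube n)
    (a : Fin n) :
    μ (box (Function.update x a 1)) =
      μ (box (Function.update x a (1 - x a))) + μ (reflMap {a} ⁻¹' box x) := by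
  have hxa := mem_cube.1 hx a
  set L := box (Function.update x a (1 - x a))
  set R := reflMap {a} ⁻¹' box x
  have hR : ∀ z, z ∈ R ↔ z a ∈ Set.Icc (1 - x a) 1 ∧ ∀ i ≠ a, z i ∈ Set.Icc 0 (x i) := by
    intro z
    rw [Set.mem_preimage, reflMap_singleton, mem_box,
      Function.forall_update_iff z (p := fun i v => v ∈ Set.Icc 0 (x i))]
    refine and_congr_left' ⟨fun h => ⟨?_, ?_⟩, fun h => ⟨?_, ?_⟩⟩ <;> linarith [h.1, h.2]
  have hunion : box (Function.update x a 1) = L ∪ R := by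
    ext z
    rw [Set.mem_union, mem_box_update, mem_box_update, hR, ← or_and_right, ← Set.mem_union,
      Set.Icc_union_Icc_eq_Icc (by linarith [hxa.2]) (by linarith [hxa.1])]
  have hinter : μ (L ∩ R) = 0 :=
    measure_mono_null (fun z hz => le_antisymm (mem_box_update.1 hz.1).1.2 ((hR z).1 hz.2).1.1)
      (h.measure_coord_eq a (1 - x a))
  rw [hunion, ← measure_union_add_inter L ((measurable_reflMap _) (measurableSet_box x)), hinter,
    add_zero]

lemma reflTrans_singleton (h : IsCopulaMeasure C μ) (a : Fin n) :
    IsCopulaMeasure (reflTrans {a} C) (μ.map (reflMap {a})) := by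
  have := h.1
  refine ⟨Measure.isProbabilityMeasure_map (measurable_reflMap _).aemeasurable,
    fun x hx => ?_, fun i => ?_⟩
  · have hxa := mem_cube.1 hx a
    rw [_root_.reflTrans_singleton, h.2.1 _ (update_mem_cube hx a ⟨zero_le_one, le_rfl⟩),
      h.2.1 _ (update_mem_cube hx a ⟨by linarith [hxa.2], by linarith [hxa.1]⟩),
      h.measure_box_update_one hx a, Measure.map_apply (measurable_reflMap _) (measurableSet_box x),
      ENNReal.toReal_add (measure_ne_top μ _) (measure_ne_top μ _), add_sub_cancel_left]
  · rw [Measure.map_map (measurable_pi_apply i) (measurable_reflMap _)]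
    by_cases hi : i = a
    · subst hi
      have hcomp : (fun y : Fin n → ℝ => y i) ∘ reflMap {i} = (fun t => 1 - t) ∘ fun y => y i := by
        funext z; simp [reflMap]
      rw [hcomp, ← Measure.map_map (g := fun t : ℝ => 1 - t) (by fun_prop) (measurable_pi_apply i),
        h.2.2 i, map_one_sub_volume_restrict_Icc]
    · have hcomp : (fun y : Fin n → ℝ => y i) ∘ reflMap {a} = fun y => y i := by
        funext z; simp [reflMap, hi]
      rw [hcomp, h.2.2 i]

lemma reflTrans (h : IsCopulaMeasure C μ) (S : Finset (Fin n)) :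
    IsCopulaMeasure (reflTrans S C) (μ.map (reflMap S)) := by
  induction S using Finset.induction_on with
  | empty => rwa [reflTrans_empty, reflMap_empty, Measure.map_id]
  | insert a S ha ih =>
    rw [reflTrans_insert ha, reflMap_insert ha,
      ← Measure.map_map (measurable_reflMap _) (measurable_reflMap _)]
    exact ih.reflTrans_singleton a

lemma extMarg {C : (Fin (n+1) → ℝ) → ℝ} {μ : Measure (Fin (n+1) → ℝ)}
    (h : IsCopulaMeasure C μ) (a : Fin (n+1)) :
    IsCopulaMeasure (extMarg C a) (μ.map fun z k => z (a.succAbove k)) := by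
  have hnull := h.measure_coord_notMem_Icc a
  obtain ⟨hμ, hbox, hunif⟩ := h
  have hm : Measurable fun (z : Fin (n+1) → ℝ) k => z (a.succAbove k) := by fun_prop
  refine ⟨Measure.isProbabilityMeasure_map hm.aemeasurable, fun y hy => ?_, fun k => ?_⟩
  · have hsplit : box (a.insertNth 1 y) =
        ((fun (z : Fin (n+1) → ℝ) k => z (a.succAbove k)) ⁻¹' box y) ∩
          {z | z a ∈ Set.Icc 0 1} := by
      ext z
      simp only [mem_box, Fin.forall_iff_succAbove a, Fin.insertNth_apply_same,
        Fin.insertNth_apply_succAbove, Set.mem_inter_iff, Set.mem_preimage, Set.mem_ofPred_eq]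
      exact and_comm
    have hy' : a.insertNth 1 y ∈ cube (n+1) := by
      simpa only [mem_cube, Fin.forall_iff_succAbove a, Fin.insertNth_apply_same,
        Fin.insertNth_apply_succAbove, Set.right_mem_Icc, zero_le_one, true_and] using hy
    rw [Measure.map_apply hm (measurableSet_box y), ← measure_inter_conull hnull, ← hsplit]
    exact hbox _ hy'
  · rw [Measure.map_map (measurable_pi_apply k) hm]
    exact hunif (a.succAbove k)

end IsCopulaMeasure

namespace IsCopula

variable {n : ℕ}

lemma permTrans {C : (Fin n → ℝ) → ℝ} (hC : IsCopula C) (τ : Equiv.Perm (Fin n)) :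
    IsCopula (permTrans τ C) :=
  let ⟨_, h⟩ := hC; ⟨_, IsCopulaMeasure.permTrans h τ⟩

lemma extMarg {C : (Fin (n+1) → ℝ) → ℝ} (hC : IsCopula C) (a : Fin (n+1)) :
    IsCopula (extMarg C a) :=
  let ⟨_, h⟩ := hC; ⟨_, IsCopulaMeasure.extMarg h a⟩

lemma reflTrans {C : (Fin n → ℝ) → ℝ} (hC : IsCopula C) (S : Finset (Fin n)) :
    IsCopula (reflTrans S C) :=
  let ⟨_, h⟩ := hC; ⟨_, IsCopulaMeasure.reflTrans h S⟩

end IsCopula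

lemma reflTrans_reflTrans_eqOn {n : ℕ} {C : (Fin n → ℝ) → ℝ} (hC : IsCopula C)
    (S T : Finset (Fin n)) :
    Set.EqOn (reflTrans T (reflTrans S C)) (reflTrans (symmDiff S T) C) (cube n) := by
  obtain ⟨μ, h⟩ := hC
  have hST := (IsCopulaMeasure.reflTrans h S).reflTrans T
  rw [Measure.map_map (measurable_reflMap T) (measurable_reflMap S), reflMap_comp] at hST
  exact hST.eqOn (IsCopulaMeasure.reflTrans h _)

lemma properMarg_apply_of_strictMono {n k : ℕ} (C : (Fin n → ℝ) → ℝ) {P : Finset (Fin n)}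
    (hk : Pᶜ.card = k) {e : Fin k → Fin n} (he : StrictMono e) (heP : ∀ j, e j ∉ P)
    {x : Fin n → ℝ} (hxP : ∀ i ∈ P, x i = 1) :
    properMarg C P (fun j => x (e (Fin.cast hk j))) = C x := by
  have hemb : e ∘ Fin.cast hk = Pᶜ.orderEmbOfFin rfl :=
    Finset.orderEmbOfFin_unique rfl (fun j => Finset.mem_compl.2 (heP _))
      (he.comp (Fin.cast_strictMono hk))
  unfold properMarg
  congr 1
  funext i
  split_ifs with hi
  · show x (e (Fin.cast hk _)) = x i
    rw [← Function.comp_apply (f := e), hemb, ← Finset.coe_orderIsoOfFin_apply,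
      OrderIso.apply_symm_apply]
  · exact (hxP i (Finset.mem_compl.not_left.1 hi)).symm

lemma dite_val_eq_zero_eq_cons {n : ℕ} (x : Fin n → ℝ) :
    (fun i : Fin (n+1) =>
      if h : (i : ℕ) = 0 then 1 else x ⟨(i : ℕ) - 1, by have := i.isLt; omega⟩) =
      Fin.cons 1 x := by
  funext i
  induction i using Fin.cases <;> simp [Fin.cons_succ]

namespace ConcordanceMeasure

variable (κ : ConcordanceMeasure) {n : ℕ}

lemma κ_eq_of_eqOn (hn : 2 ≤ n) {A B : (Fin n → ℝ) → ℝ} (hA : IsCopula A) (hB : IsCopula B)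
    (h : Set.EqOn A B (cube n)) : κ.κ n A = κ.κ n B :=
  le_antisymm
    (κ.mono n hn A B hA hB (fun _ hx => (h hx).le) fun _ hx => (reflTrans_eqOn h _ hx).le)
    (κ.mono n hn B A hB hA (fun _ hx => (h hx).ge) fun _ hx => (reflTrans_eqOn h _ hx).ge)

lemma κ_reflTrans_compl (hn : 2 ≤ n) {C : (Fin n → ℝ) → ℝ} (hC : IsCopula C)
    (S : Finset (Fin n)) : κ.κ n (reflTrans Sᶜ C) = κ.κ n (reflTrans S C) := by
  rw [← κ.duality n hn _ (hC.reflTrans S), κ.κ_eq_of_eqOn hn ((hC.reflTrans S).reflTrans _)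
    (hC.reflTrans _) (reflTrans_reflTrans_eqOn hC S _), ← Finset.top_eq_univ, symmDiff_top,
    hnot_eq_compl]

lemma r_mul_κ_extMarg (hn : 2 ≤ n) {C : (Fin (n+1) → ℝ) → ℝ} (hC : IsCopula C) (a : Fin (n+1)) :
    κ.r n * κ.κ n (extMarg C a) = κ.κ (n+1) C + κ.κ (n+1) (reflTrans {a} C) := by
  have hn1 : 2 ≤ n + 1 := hn.trans n.le_succ
  rw [κ.transition n hn _ (permTrans a.cycleRange C) (hC.extMarg a) (hC.permTrans _) fun x _ => by
      rw [dite_val_eq_zero_eq_cons]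
      simp only [extMarg, permTrans, Fin.cons_apply_cycleRange],
    κ.permInv _ hn1 C hC, ← Fin.cycleRange_self a, reflTrans_singleton_permTrans,
    κ.permInv _ hn1 _ (hC.reflTrans _)]

lemma r_mul_κ_extMarg_pair (hn : 2 ≤ n) {C : (Fin (n+2) → ℝ) → ℝ} (hC : IsCopula C)
    (a c : Fin (n+2)) (b : Fin (n+1)) (hc : a.succAbove b = c) :
    κ.r (n+1) * (κ.κ (n+1) (extMarg C a) + κ.κ (n+1) (extMarg C c) -
        κ.r n * κ.κ n (extMarg (extMarg C a) b)) =
      κ.κ (n+2) C - κ.κ (n+2) (reflTrans {a, c} C) := by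
  subst hc
  have hn1 : 2 ≤ n + 1 := hn.trans n.le_succ
  have hCc := κ.r_mul_κ_extMarg hn1 hC (a.succAbove b)
  have hCab := κ.r_mul_κ_extMarg hn (hC.extMarg a) b
  have hσCa := κ.r_mul_κ_extMarg hn1 (hC.reflTrans {a.succAbove b}) a
  rw [reflTrans_singleton_extMarg] at hCab
  rw [← reflTrans_insert (Finset.notMem_singleton.2 (Fin.succAbove_ne a b).symm)] at hσCa
  linear_combination hCc - κ.r (n+1) * hCab - hσCa

lemma κ_cast {m k : ℕ} (h : m = k) (F : (Fin m → ℝ) → ℝ) :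
    κ.κ m F = κ.κ k (fun z => F fun j => z (Fin.cast h j)) := by
  subst h
  rfl

lemma κ_properMarg_singleton (C : (Fin (n+1) → ℝ) → ℝ) (a : Fin (n+1)) :
    κ.κ ({a}ᶜ : Finset (Fin (n+1))).card (properMarg C {a}) = κ.κ n (extMarg C a) := by
  have hk : ({a}ᶜ : Finset (Fin (n+1))).card = n := by
    rw [Finset.card_compl, Finset.card_singleton, Fintype.card_fin, Nat.add_sub_cancel]
  rw [κ.κ_cast hk]
  congr 1
  funext z
  have := properMarg_apply_of_strictMono C hk (Fin.strictMono_succAbove a)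
    (by simp [Fin.succAbove_ne]) (x := a.insertNth 1 z) (by simp)
  simpa only [extMarg, Fin.insertNth_apply_succAbove] using this

lemma κ_properMarg_pair (C : (Fin (n+2) → ℝ) → ℝ) (a c : Fin (n+2)) (b : Fin (n+1))
    (hc : a.succAbove b = c) :
    κ.κ ({a, c}ᶜ : Finset (Fin (n+2))).card (properMarg C {a, c}) =
      κ.κ n (extMarg (extMarg C a) b) := by
  subst hc
  have hk : ({a, a.succAbove b}ᶜ : Finset (Fin (n+2))).card = n := by
    rw [Finset.card_compl, Finset.card_pair (Fin.succAbove_ne a b).symm, Fintype.card_fin,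
      Nat.add_sub_cancel]
  rw [κ.κ_cast hk]
  congr 1
  funext z
  have := properMarg_apply_of_strictMono C hk (e := a.succAbove ∘ b.succAbove)
    ((Fin.strictMono_succAbove a).comp (Fin.strictMono_succAbove b))
    (by simp [Fin.succAbove_ne]) (x := a.insertNth 1 (b.insertNth 1 z))
    (by simp)
  simpa only [extMarg, Function.comp_apply, Fin.insertNth_apply_succAbove] using this

end ConcordanceMeasure

theorem stmt16_general (κ : ConcordanceMeasure) (hr2 : κ.r 2 = 2/3)
    (hr3 : κ.r 3 ≠ 0)
    (C : (Fin 4 → ℝ) → ℝ) (hC : IsCopula C) :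
    κ.κ (({0} : Finset (Fin 4))ᶜ.card) (properMarg C {0}) +
      κ.κ (({1} : Finset (Fin 4))ᶜ.card) (properMarg C {1}) -
      (2/3) * κ.κ (({0, 1} : Finset (Fin 4))ᶜ.card) (properMarg C {0, 1}) =
    κ.κ (({2} : Finset (Fin 4))ᶜ.card) (properMarg C {2}) +
      κ.κ (({3} : Finset (Fin 4))ᶜ.card) (properMarg C {3}) -
      (2/3) * κ.κ (({2, 3} : Finset (Fin 4))ᶜ.card) (properMarg C {2, 3}) := by
  have h01 := κ.r_mul_κ_extMarg_pair le_rfl hC 0 1 0 rfl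
  have h23 := κ.r_mul_κ_extMarg_pair le_rfl hC 2 3 2 rfl
  have hcompl := κ.κ_reflTrans_compl (by norm_num) hC {0, 1}
  rw [show ({0, 1} : Finset (Fin 4))ᶜ = {2, 3} by decide] at hcompl
  rw [κ.κ_properMarg_singleton, κ.κ_properMarg_singleton, κ.κ_properMarg_singleton,
    κ.κ_properMarg_singleton, κ.κ_properMarg_pair C 0 1 0 rfl,
    κ.κ_properMarg_pair C 2 3 2 rfl, ← hr2]
  refine mul_left_cancel₀ hr3 ?_
  linear_combination h01 - h23 + hcompl

/-- Example after Theorem 4.5 of Taylor: for a 4-copula `C` (with `r_2 = 2/3` and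
`r_3, r_4 ≠ 0`), `κ_3(C_1) + κ_3(C_2) - (2/3)κ_2(C_12) = κ_3(C_3) + κ_3(C_4) - (2/3)κ_2(C_34)`. -/
theorem stmt16 (κ : ConcordanceMeasure) (hr2 : κ.r 2 = 2/3)
    (hr3 : κ.r 3 ≠ 0) (hr4 : κ.r 4 ≠ 0)
    (C : (Fin 4 → ℝ) → ℝ) (hC : IsCopula C) :
    κ.κ (({0} : Finset (Fin 4))ᶜ.card) (properMarg C {0}) +
      κ.κ (({1} : Finset (Fin 4))ᶜ.card) (properMarg C {1}) -
      (2/3) * κ.κ (({0, 1} : Finset (Fin 4))ᶜ.card) (properMarg C {0, 1}) =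
    κ.κ (({2} : Finset (Fin 4))ᶜ.card) (properMarg C {2}) +
      κ.κ (({3} : Finset (Fin 4))ᶜ.card) (properMarg C {3}) -
      (2/3) * κ.κ (({2, 3} : Finset (Fin 4))ᶜ.card) (properMarg C {2, 3}) :=
  stmt16_general κ hr2 hr3 C hC

end
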